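/- Let χ be the spectral measure of the indicator of the square-free integers, i.e., χ = D Σ_{d squarefree} ((1/d²) ∏_{p|d}(p²-2)^{-1}) Σ_{j=0}^{d²-1} δ_{j/d²} viewed as a measure on [-1/2,1/2] (mod 1), where D = ∏_p (1 - 2/p²). Then there is a constant c > 0 such that for every interval I ⊆ [-1/2, 1/2], χ(I) ≥ c·|I|^{3/2}. -/

import Mathlib

open MeasureTheory
open scoped ENNReal

/-- `D = ∏_p (1 - 2/p²)`. -/
noncomputable def Dconst : ℝ := ∏' p : Nat.Primes, (1 - 2 / (p : ℝ) ^ 2)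

/-- The (1-periodized) spectral measure of the square-free indicator on `ℝ`:
`χ = D Σ_{d squarefree} (d⁻² ∏_{p|d} (p²-2)⁻¹) Σ_{j ∈ ℤ} δ_{j/d²}`. -/
noncomputable def chiSFper : Measure ℝ :=
  Measure.sum (fun d : ℕ =>
    if Squarefree d then
      ENNReal.ofReal (Dconst / d ^ 2 * ∏ p ∈ d.primeFactors, (1 / ((p : ℝ) ^ 2 - 2))) •
        Measure.sum (fun j : ℤ => Measure.dirac ((j : ℝ) / (d ^ 2 : ℝ)))
    else 0)

/-- Telescoping bound on the sum of `1/k²`. -/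
lemma sum_inv_sq_le (K : ℕ) : ∑ k ∈ Finset.Icc 2 K, (1:ℝ)/(k:ℝ)^2 ≤ 3/4 := by
  rcases lt_or_ge K 2 with hK | hK
  · rw [Finset.Icc_eq_empty (by omega)]; norm_num
  · have main : ∀ K : ℕ, 2 ≤ K → ∑ k ∈ Finset.Icc 2 K, (1:ℝ)/(k:ℝ)^2 ≤ 3/4 - 1/(K:ℝ) := by
      intro K hK
      induction K, hK using Nat.le_induction with
      | base => norm_num
      | succ n hn ih =>
        rw [Finset.sum_Icc_succ_top (by omega)]
        have hn0 : (0:ℝ) < (n:ℝ) := by positivity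
        have hn1 : (0:ℝ) < (n:ℝ) + 1 := by positivity
        have key : (1:ℝ)/((n:ℝ)+1)^2 ≤ 1/(n:ℝ) - 1/((n:ℝ)+1) := by
          rw [div_sub_div _ _ (ne_of_gt hn0) (ne_of_gt hn1)]
          rw [div_le_div_iff₀ (by positivity) (by positivity)]
          ring_nf
          nlinarith
        push_cast
        linarith [ih]
    have h0 : (0:ℝ) ≤ 1/(K:ℝ) := by positivity
    linarith [main K hK]

/-- Squarefree numbers have positive density in `(N, 8N]`. -/
lemma squarefree_card_lb (N : ℕ) (hN : 1 ≤ N) :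
    N ≤ ((Finset.Ioc N (8*N)).filter Squarefree).card := by
  classical
  set s := Finset.Ioc N (8*N) with hs
  have hcard : s.card = 7 * N := by rw [hs, Nat.card_Ioc]; omega
  have hsub : s.filter (fun n => ¬ Squarefree n) ⊆
      (Finset.Icc 2 (8*N)).biUnion (fun k => (Finset.Ioc 0 (8*N)).filter (k^2 ∣ ·)) := by
    intro n hn
    rw [Finset.mem_filter] at hn
    obtain ⟨hns, hnsf⟩ := hn
    rw [hs, Finset.mem_Ioc] at hns
    have hn0 : n ≠ 0 := by omega
    rw [Nat.squarefree_iff_prime_squarefree] at hnsf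
    push_neg at hnsf
    obtain ⟨p, hp, hpd⟩ := hnsf
    have hp2 : 2 ≤ p := hp.two_le
    have hple : p * p ≤ n := Nat.le_of_dvd (by omega) hpd
    rw [Finset.mem_biUnion]
    refine ⟨p, ?_, ?_⟩
    · rw [Finset.mem_Icc]
      constructor
      · exact hp2
      · nlinarith
    · rw [Finset.mem_filter, Finset.mem_Ioc]
      exact ⟨⟨by omega, hns.2⟩, by rwa [pow_two]⟩
  have hnsf_card : (s.filter (fun n => ¬ Squarefree n)).card ≤ 6 * N := by
    have h1 : (s.filter (fun n => ¬ Squarefree n)).card ≤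
        ∑ k ∈ Finset.Icc 2 (8*N), ((Finset.Ioc 0 (8*N)).filter (k^2 ∣ ·)).card :=
      le_trans (Finset.card_le_card hsub) (Finset.card_biUnion_le)
    have h2 : ∀ k : ℕ, ((Finset.Ioc 0 (8*N)).filter (k^2 ∣ ·)).card = (8*N) / k^2 := by
      intro k
      exact Nat.Ioc_filter_dvd_card_eq_div (8*N) (k^2)
    simp only [h2] at h1
    have h3 : (∑ k ∈ Finset.Icc 2 (8*N), (8*N) / k^2 : ℕ) ≤ 6 * N := by
      have hr : ((∑ k ∈ Finset.Icc 2 (8*N), (8*N) / k^2 : ℕ) : ℝ) ≤ ((6*N : ℕ) : ℝ) := by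
        push_cast
        calc (∑ k ∈ Finset.Icc 2 (8*N), ((8*N) / k^2 : ℕ) : ℝ)
            ≤ ∑ k ∈ Finset.Icc 2 (8*N), (8*N : ℝ) / (k:ℝ)^2 := by
              apply Finset.sum_le_sum
              intro k hk
              have := Nat.cast_div_le (α := ℝ) (m := 8*N) (n := k^2)
              push_cast at this ⊢
              exact this
          _ = (8*N : ℝ) * ∑ k ∈ Finset.Icc 2 (8*N), (1:ℝ)/(k:ℝ)^2 := by
              rw [Finset.mul_sum]; congr 1; ext k; ring
          _ ≤ (8*N : ℝ) * (3/4) := by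
              apply mul_le_mul_of_nonneg_left (sum_inv_sq_le _) (by positivity)
          _ = (6*N : ℝ) := by ring
      exact_mod_cast hr
    omega
  have hsplit := Finset.card_filter_add_card_filter_not (s := s) (p := Squarefree)
  omega

lemma prime_factor_pos (p : ℕ) (hp : p.Prime) : (0:ℝ) < 1 - 2 / (p:ℝ)^2 := by
  have h2 : (2:ℝ) ≤ (p:ℝ) := by exact_mod_cast hp.two_le
  have : 2 / (p:ℝ)^2 ≤ 1/2 := by
    rw [div_le_div_iff₀ (by positivity) (by norm_num)]
    nlinarith
  linarith

lemma Dconst_pos : 0 < Dconst := by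
  have hpos : ∀ p : Nat.Primes, 0 < 1 - 2 / ((p:ℕ):ℝ)^2 := fun p => prime_factor_pos p p.2
  have hsum : Summable fun p : Nat.Primes => Real.log (1 - 2 / ((p:ℕ):ℝ)^2) := by
    apply Summable.of_abs
    have hmaj : Summable fun p : Nat.Primes => (8:ℝ) / ((p:ℕ):ℝ)^2 := by
      have h1 : Summable fun n : ℕ => (8:ℝ) / (n:ℝ)^2 := by
        have := (Real.summable_one_div_nat_pow (p := 2)).mpr one_lt_two
        have := this.mul_left 8
        apply this.congr
        intro n; ring
      exact h1.subtype {p : ℕ | p.Prime}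
    apply Summable.of_nonneg_of_le (fun p => abs_nonneg _) ?_ hmaj
    intro p
    have hp2 : (2:ℝ) ≤ ((p:ℕ):ℝ) := by exact_mod_cast p.2.two_le
    set x : ℝ := 2 / ((p:ℕ):ℝ)^2 with hx
    have hx0 : 0 < x := by positivity
    have hxh : x ≤ 1/2 := by
      rw [hx, div_le_div_iff₀ (by positivity) (by norm_num)]
      nlinarith
    have hlog : Real.log (1 - x) ≤ 0 := Real.log_nonpos (by linarith) (by linarith)
    rw [abs_of_nonpos hlog]
    have h1x : (0:ℝ) < 1 - x := by linarith
    have : -Real.log (1 - x) = Real.log (1 - x)⁻¹ := by rw [Real.log_inv]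
    rw [this]
    have h2 : Real.log (1 - x)⁻¹ ≤ (1 - x)⁻¹ - 1 :=
      Real.log_le_sub_one_of_pos (by positivity)
    have h3 : (1 - x)⁻¹ - 1 = x / (1 - x) := by field_simp; ring
    have h4 : x / (1 - x) ≤ 2 * x := by
      rw [div_le_iff₀ h1x]
      nlinarith
    have h5 : 2 * x ≤ 8 / ((p:ℕ):ℝ)^2 := by
      have he : 2 * x = 4 / ((p:ℕ):ℝ)^2 := by rw [hx]; ring
      rw [he]
      gcongr
      norm_num
    linarith
  have key := Real.rexp_tsum_eq_tprod (f := fun p : Nat.Primes => 1 - 2 / ((p:ℕ):ℝ)^2) hpos hsum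
  rw [Dconst, ← key]
  exact Real.exp_pos _

set_option maxHeartbeats 1000000 in
/-- The spectral measure of the square-free indicator is not too thin: there is `c > 0`
such that `χ(I) ≥ c|I|^{3/2}` for every interval `I ⊆ [-1/2, 1/2]`. -/
theorem chiSF_interval_lower_bound :
    ∃ c : ℝ, 0 < c ∧ ∀ a b : ℝ, -(1/2) ≤ a → a ≤ b → b ≤ 1/2 →
      ENNReal.ofReal (c * (b - a) ^ ((3 : ℝ) / 2)) ≤ chiSFper (Set.Icc a b) := by
  refine ⟨Dconst / 100000, div_pos Dconst_pos (by norm_num), ?_⟩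
  intro a b ha hab hb
  rcases eq_or_lt_of_le hab with heq | hlt
  · subst heq
    rw [sub_self, Real.zero_rpow (by norm_num), mul_zero, ENNReal.ofReal_zero]
    exact zero_le
  set L : ℝ := b - a with hLdef
  have hL0 : 0 < L := by simp [hLdef]; linarith
  have hL1 : L ≤ 1 := by simp [hLdef]; linarith
  set t : ℝ := Real.sqrt (2/L) with htdef
  have h2L : (2:ℝ) ≤ 2/L := by rw [le_div_iff₀ hL0]; nlinarith
  have ht0 : 0 ≤ t := Real.sqrt_nonneg _
  have hsq2 : (Real.sqrt 2)^2 = 2 := Real.sq_sqrt (by norm_num)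
  have ht1 : 1 ≤ t := by
    have h := Real.sqrt_le_sqrt h2L
    nlinarith [Real.sqrt_nonneg (2:ℝ)]
  set N : ℕ := ⌈t⌉₊ with hNdef
  have hN1 : 1 ≤ N := Nat.one_le_ceil_iff.mpr (by linarith)
  have htN : t ≤ (N:ℝ) := Nat.le_ceil t
  have hNt : (N:ℝ) ≤ 2*t := by
    have := Nat.ceil_lt_add_one ht0
    rw [← hNdef] at this
    linarith
  have hNr : (1:ℝ) ≤ (N:ℝ) := by exact_mod_cast hN1
  set S := (Finset.Ioc N (8*N)).filter Squarefree with hSdef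
  have hScard : N ≤ S.card := squarefree_card_lb N hN1
  set X : ℝ≥0∞ := ENNReal.ofReal (Dconst / (8*(N:ℝ))^4) with hXdef
  set F : ℕ → Measure ℝ := fun d =>
    if Squarefree d then
      ENNReal.ofReal (Dconst / d ^ 2 * ∏ p ∈ d.primeFactors, (1 / ((p : ℝ) ^ 2 - 2))) •
        Measure.sum (fun j : ℤ => Measure.dirac ((j : ℝ) / (d ^ 2 : ℝ)))
    else 0 with hFdef
  have hchi : chiSFper = Measure.sum F := rfl
  -- per-term lower bound
  have hterm : ∀ d ∈ S, X ≤ F d (Set.Icc a b) := by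
    intro d hd
    rw [hSdef, Finset.mem_filter, Finset.mem_Ioc] at hd
    obtain ⟨⟨hdN, hd8N⟩, hdsf⟩ := hd
    rw [hFdef]
    simp only [if_pos hdsf, Measure.smul_apply, smul_eq_mul]
    have hd0 : 0 < d := by omega
    have hdR : (1:ℝ) ≤ (d:ℝ) := by exact_mod_cast hd0
    have hdt : t < (d:ℝ) := by
      have : (N:ℝ) < (d:ℝ) := by exact_mod_cast hdN
      linarith
    have hd8NR : (d:ℝ) ≤ 8*(N:ℝ) := by exact_mod_cast hd8N
    have hsqt : t^2 = 2/L := Real.sq_sqrt (by positivity)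
    have hd2L : 2 < (d:ℝ)^2 * L := by
      have h1 : 2/L < (d:ℝ)^2 := by nlinarith
      have h2 : (2/L) * L = 2 := by field_simp
      nlinarith
    -- the inner sum of diracs has mass ≥ 1 on the interval
    have hinner : 1 ≤ (Measure.sum fun j : ℤ => Measure.dirac ((j:ℝ)/((d:ℝ)^2))) (Set.Icc a b) := by
      rw [Measure.sum_apply _ measurableSet_Icc]
      set j0 : ℤ := ⌈a * (d:ℝ)^2⌉ with hj0
      have hmem : ((j0:ℝ)/((d:ℝ)^2)) ∈ Set.Icc a b := by
        constructor
        · rw [le_div_iff₀ (by positivity)]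
          have := Int.le_ceil (a * (d:ℝ)^2)
          linarith
        · rw [div_le_iff₀ (by positivity)]
          have h1 : (j0:ℝ) < a*(d:ℝ)^2 + 1 := Int.ceil_lt_add_one _
          have h2 : b*(d:ℝ)^2 = a*(d:ℝ)^2 + (d:ℝ)^2*L := by rw [hLdef]; ring
          nlinarith
      calc (1:ℝ≥0∞) = Measure.dirac ((j0:ℝ)/((d:ℝ)^2)) (Set.Icc a b) :=
            (Measure.dirac_apply_of_mem hmem).symm
        _ ≤ ∑' j : ℤ, Measure.dirac ((j:ℝ)/((d:ℝ)^2)) (Set.Icc a b) := ENNReal.le_tsum j0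
    -- the coefficient is at least `Dconst/(8N)^4`
    have hcoef : Dconst/(8*(N:ℝ))^4 ≤ Dconst / (d:ℝ)^2 * ∏ p ∈ d.primeFactors, (1/((p:ℝ)^2-2)) := by
      have hprodd : ∏ p ∈ d.primeFactors, (p:ℝ) = (d:ℝ) := by
        rw [← Nat.cast_prod, Nat.prod_primeFactors_of_squarefree hdsf]
      have h1 : ∏ p ∈ d.primeFactors, (1/((p:ℝ)^2)) ≤ ∏ p ∈ d.primeFactors, (1/((p:ℝ)^2-2)) := by
        apply Finset.prod_le_prod
        · intro p hp; positivity
        · intro p hp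
          have hpp : (Nat.prime_of_mem_primeFactors hp).two_le = (Nat.prime_of_mem_primeFactors hp).two_le := rfl
          have h2 : (2:ℝ) ≤ (p:ℝ) := by exact_mod_cast (Nat.prime_of_mem_primeFactors hp).two_le
          have h3 : (0:ℝ) < (p:ℝ)^2 - 2 := by nlinarith
          apply one_div_le_one_div_of_le h3
          nlinarith
      have h2 : ∏ p ∈ d.primeFactors, (1/((p:ℝ)^2)) = 1/(d:ℝ)^2 := by
        calc ∏ p ∈ d.primeFactors, (1/((p:ℝ)^2))
            = (∏ p ∈ d.primeFactors, (p:ℝ)^2)⁻¹ := by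
              rw [← Finset.prod_inv_distrib]; simp only [one_div]
          _ = ((∏ p ∈ d.primeFactors, (p:ℝ))^2)⁻¹ := by rw [Finset.prod_pow]
          _ = 1/(d:ℝ)^2 := by rw [hprodd, one_div]
      calc Dconst/(8*(N:ℝ))^4 ≤ Dconst/(d:ℝ)^4 := by
            apply div_le_div_of_nonneg_left Dconst_pos.le (by positivity)
            have hd4 : (d:ℝ)^4 ≤ (8*(N:ℝ))^4 := pow_le_pow_left₀ (by positivity) hd8NR 4
            linarith
        _ = Dconst/(d:ℝ)^2 * (1/(d:ℝ)^2) := by ring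
        _ ≤ Dconst/(d:ℝ)^2 * ∏ p ∈ d.primeFactors, (1/((p:ℝ)^2-2)) := by
            apply mul_le_mul_of_nonneg_left _ (div_nonneg Dconst_pos.le (by positivity))
            rw [← h2]; exact h1
    calc X ≤ ENNReal.ofReal (Dconst / (d:ℝ)^2 * ∏ p ∈ d.primeFactors, (1/((p:ℝ)^2-2))) := by
          rw [hXdef]; exact ENNReal.ofReal_le_ofReal hcoef
      _ ≤ ENNReal.ofReal (Dconst / (d:ℝ)^2 * ∏ p ∈ d.primeFactors, (1/((p:ℝ)^2-2))) *
            (Measure.sum fun j : ℤ => Measure.dirac ((j:ℝ)/((d:ℝ)^2))) (Set.Icc a b) :=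
          le_mul_of_one_le_right zero_le hinner
      _ = _ := by norm_cast
  -- the key real inequality
  set s : ℝ := Real.sqrt L with hsdef
  have hs0 : 0 < s := Real.sqrt_pos.mpr hL0
  have hst : s * t = Real.sqrt 2 := by
    rw [hsdef, htdef, ← Real.sqrt_mul hL0.le]
    congr 1
    field_simp
  have hLs : L ^ ((3:ℝ)/2) = s^3 := by
    have h1 : L ^ ((3:ℝ)/2) = (L ^ ((1:ℝ)/2)) ^ (3:ℕ) := by
      rw [← Real.rpow_natCast (L ^ ((1:ℝ)/2)) 3, ← Real.rpow_mul hL0.le]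
      norm_num
    rw [h1, hsdef, Real.sqrt_eq_rpow]
  have h15 : Real.sqrt 2 ≤ 3/2 := by nlinarith [Real.sqrt_nonneg (2:ℝ)]
  have hfinal : Dconst/100000 * L ^ ((3:ℝ)/2) ≤ (N:ℝ) * (Dconst/(8*(N:ℝ))^4) := by
    rw [hLs]
    have hrhs : (N:ℝ) * (Dconst/(8*(N:ℝ))^4) = Dconst/(4096*(N:ℝ)^3) := by
      field_simp
      ring
    rw [hrhs]
    have step1 : Dconst/(4096*(2*t)^3) ≤ Dconst/(4096*(N:ℝ)^3) := by
      apply div_le_div_of_nonneg_left Dconst_pos.le (by positivity)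
      have hN3 : (N:ℝ)^3 ≤ (2*t)^3 := pow_le_pow_left₀ (by positivity) hNt 3
      linarith
    have step2 : Dconst/100000 * s^3 ≤ Dconst/(4096*(2*t)^3) := by
      rw [div_mul_eq_mul_div, div_le_div_iff₀ (by norm_num) (by positivity)]
      have he : Dconst * s^3 * (4096*(2*t)^3) = 32768 * Dconst * (s^3 * t^3) := by ring
      have hst3 : s^3 * t^3 = 2 * Real.sqrt 2 := by
        have h : s^3 * t^3 = (s*t)^3 := by ring
        rw [h, hst, pow_succ, hsq2]
      rw [he, hst3]
      nlinarith [Dconst_pos.le]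
    linarith
  -- put it all together
  calc ENNReal.ofReal (Dconst/100000 * L ^ ((3:ℝ)/2))
      ≤ ENNReal.ofReal ((N:ℝ) * (Dconst/(8*(N:ℝ))^4)) := ENNReal.ofReal_le_ofReal hfinal
    _ = (N : ℝ≥0∞) * X := by
        rw [ENNReal.ofReal_mul (by positivity), ENNReal.ofReal_natCast, hXdef]
    _ ≤ (S.card : ℝ≥0∞) * X := mul_le_mul_left (by exact_mod_cast hScard) X
    _ = ∑ _d ∈ S, X := by rw [Finset.sum_const, nsmul_eq_mul]
    _ ≤ ∑ d ∈ S, F d (Set.Icc a b) := Finset.sum_le_sum hterm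
    _ ≤ ∑' d, F d (Set.Icc a b) := ENNReal.sum_le_tsum S
    _ = chiSFper (Set.Icc a b) := by
        rw [hchi, Measure.sum_apply _ measurableSet_Icc]
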